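/- arXiv:2207.07352 — 2 statements merged into one kernel-verified Lean document; each statement's English description precedes it below -/
import Mathlib

section
/- Let z_F > 0, let D : ℝ → ℝ be continuous on [0,z_F] with D(z) > 0 for all z ∈ [0,z_F) and with 1/D integrable on (0,z_F), set I(D) = (∫₀^{z_F} 1/D(z) dz)^{1/2}, and let f, 𝒢, ℱ, M_α > 0 be real constants. Define the bilinear form 𝒜(v,φ) = (𝒢/f)∫₀^{z_F} v·φ + (1/f)∫₀^{z_F} D·v'·φ' + ℱ·φ(z_F)·v(z_F) − ℱ·∫₀^{z_F} v·φ' − (M_α/f)·∫₀^{z_F} D·v·φ'. Then for all continuously differentiable v, φ on [0,z_F], |𝒜(v,φ)| ≤ C·‖v‖_α·‖φ‖_α, where C = 𝒢/f + 1/f + ℱ·(1/√z_F + 2·I(D))² + ℱ·(1/√z_F + 2·I(D))·I(D) + (M_α/f)·(sup_{z∈[0,z_F]} D(z))^{1/2}. -/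
/-!
Each of the five terms of `𝒜` is estimated separately. The integral terms are Cauchy–Schwarz,
with the weight `D` split as `√D · √D` between the two factors and `D ≤ sup D` where only one
factor carries a derivative. The `L¹` norm of a derivative is controlled by Cauchy–Schwarz
against `1/√D`: `∫ |w'| ≤ I(D) (∫ D w'²)^{1/2}`. The boundary term and `∫ v φ'` need a pointwise
bound: averaging `|w z| ≤ |w y| + ∫ |w'|` over `y ∈ [0, z_F]` and using Cauchy–Schwarz on
`∫ |w|` gives `|w z| ≤ z_F^{-1/2} ‖w‖_{L²} + I(D) (∫ D w'²)^{1/2} ≤ (1/√z_F + 2 I(D)) ‖w‖_α`.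
-/

open MeasureTheory

/-- `I(D) = (∫₀^{z_F} 1/D)^{1/2}`. -/
noncomputable def IofD (zF : ℝ) (D : ℝ → ℝ) : ℝ :=
  Real.sqrt (∫ t in (0:ℝ)..zF, 1 / D t)

/-- The weighted norm `‖v‖_α = (∫₀^{z_F} D v'² + ∫₀^{z_F} v²)^{1/2}`. -/
noncomputable def normAlpha (zF : ℝ) (D v v' : ℝ → ℝ) : ℝ :=
  Real.sqrt ((∫ t in (0:ℝ)..zF, D t * (v' t) ^ 2) + ∫ t in (0:ℝ)..zF, (v t) ^ 2)

/-- The bilinear form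
`𝒜(v,φ) = (𝒢/f)∫ vφ + (1/f)∫ D v'φ' + ℱ φ(z_F) v(z_F) − ℱ ∫ v φ' − (M_α/f) ∫ D v φ'`. -/
noncomputable def Abil (zF f Gc Fc Ma : ℝ) (D v v' φ φ' : ℝ → ℝ) : ℝ :=
  (Gc / f) * (∫ t in (0:ℝ)..zF, v t * φ t)
    + (1 / f) * (∫ t in (0:ℝ)..zF, D t * v' t * φ' t)
    + Fc * (φ zF * v zF)
    - Fc * (∫ t in (0:ℝ)..zF, v t * φ' t)
    - (Ma / f) * (∫ t in (0:ℝ)..zF, D t * v t * φ' t)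

open Set

section CauchySchwarz

variable {α : Type*} [MeasurableSpace α] {μ : Measure α} {f g : α → ℝ}

theorem abs_integral_mul_le_sqrt_mul_sqrt (hf : Integrable (fun x => f x ^ 2) μ)
    (hg : Integrable (fun x => g x ^ 2) μ) (hfg : Integrable (fun x => f x * g x) μ) :
    |∫ x, f x * g x ∂μ| ≤ √(∫ x, f x ^ 2 ∂μ) * √(∫ x, g x ^ 2 ∂μ) := by
  set A := ∫ x, f x ^ 2 ∂μ
  set B := ∫ x, f x * g x ∂μ
  set C := ∫ x, g x ^ 2 ∂μ
  have hquad : ∀ t : ℝ, 0 ≤ A * (t * t) + 2 * B * t + C := fun t => by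
    have hexpand : ∫ x, (t * f x + g x) ^ 2 ∂μ = A * (t * t) + 2 * B * t + C := by
      have hpoly : (fun x => (t * f x + g x) ^ 2)
          = fun x => t * t * f x ^ 2 + (2 * t * (f x * g x) + g x ^ 2) := by
        ext x; ring
      have hint : Integrable (fun x => 2 * t * (f x * g x) + g x ^ 2) μ :=
        (hfg.const_mul _).add hg
      rw [hpoly, integral_add (hf.const_mul _) hint,
        integral_add (hfg.const_mul _) hg, integral_const_mul, integral_const_mul]
      ring
    exact hexpand ▸ integral_nonneg fun x => sq_nonneg _
  have hB : B ^ 2 ≤ A * C := by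
    have := discrim_le_zero hquad
    rw [discrim] at this
    nlinarith
  calc |B| = √(B ^ 2) := (Real.sqrt_sq_eq_abs B).symm
    _ ≤ √(A * C) := Real.sqrt_le_sqrt hB
    _ = √A * √C := Real.sqrt_mul (integral_nonneg fun x => sq_nonneg _) C

end CauchySchwarz

section Interval

variable {a b : ℝ} {D u w w' : ℝ → ℝ}

theorem intervalIntegral.abs_integral_mul_le_sqrt_mul_sqrt (hab : a ≤ b) {f g : ℝ → ℝ}
    (hf : IntervalIntegrable (fun x => f x ^ 2) volume a b)
    (hg : IntervalIntegrable (fun x => g x ^ 2) volume a b)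
    (hfg : IntervalIntegrable (fun x => f x * g x) volume a b) :
    |∫ x in a..b, f x * g x| ≤ √(∫ x in a..b, f x ^ 2) * √(∫ x in a..b, g x ^ 2) := by
  simp only [intervalIntegral.integral_of_le hab]
  exact _root_.abs_integral_mul_le_sqrt_mul_sqrt hf.1 hg.1 hfg.1

theorem nonneg_on_Icc_of_pos_on_Ioo (hab : a < b) (hD : ContinuousOn D (Icc a b))
    (hDpos : ∀ x ∈ Ioo a b, 0 < D x) : ∀ x ∈ Icc a b, 0 ≤ D x := by
  rw [← closure_Ioo hab.ne] at hD ⊢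
  intro x hx
  have hsub : D '' Ioo a b ⊆ Ici 0 := image_subset_iff.2 fun y hy => (hDpos y hy).le
  exact closure_minimal hsub isClosed_Ici (hD.image_closure (mem_image_of_mem D hx))

theorem abs_integral_mul_mul_le_sqrt_mul_sqrt (hab : a ≤ b) (hD : ContinuousOn D (Icc a b))
    (hD0 : ∀ x ∈ Icc a b, 0 ≤ D x) (hu : ContinuousOn u (Icc a b))
    (hw : ContinuousOn w (Icc a b)) :
    |∫ x in a..b, D x * u x * w x| ≤
      √(∫ x in a..b, D x * u x ^ 2) * √(∫ x in a..b, D x * w x ^ 2) := by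
  have hsD : ContinuousOn (fun x => √(D x)) (Icc a b) := hD.sqrt
  have hweight : ∀ {h : ℝ → ℝ}, ∫ x in a..b, (√(D x) * h x) ^ 2 = ∫ x in a..b, D x * h x ^ 2 :=
    intervalIntegral.integral_congr fun x hx => by
      rw [uIcc_of_le hab] at hx
      simp only [mul_pow, Real.sq_sqrt (hD0 x hx)]
  have hprod : ∫ x in a..b, D x * u x * w x = ∫ x in a..b, (√(D x) * u x) * (√(D x) * w x) :=
    intervalIntegral.integral_congr fun x hx => by
      rw [uIcc_of_le hab] at hx
      linear_combination (-(u x * w x)) * Real.mul_self_sqrt (hD0 x hx)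
  rw [hprod, ← hweight, ← hweight]
  exact intervalIntegral.abs_integral_mul_le_sqrt_mul_sqrt hab
    (((hsD.mul hu).pow 2).intervalIntegrable_of_Icc hab)
    (((hsD.mul hw).pow 2).intervalIntegrable_of_Icc hab)
    (((hsD.mul hu).mul (hsD.mul hw)).intervalIntegrable_of_Icc hab)

theorem integral_abs_le_sqrt_integral_inv_mul_sqrt (hab : a ≤ b) (hD : ContinuousOn D (Icc a b))
    (hDpos : ∀ x ∈ Ioo a b, 0 < D x) (hDinv : IntervalIntegrable (fun x => 1 / D x) volume a b)
    (hw : ContinuousOn w (Icc a b)) :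
    ∫ x in a..b, |w x| ≤ √(∫ x in a..b, 1 / D x) * √(∫ x in a..b, D x * w x ^ 2) := by
  simp only [intervalIntegral.integral_of_le hab, integral_Ioc_eq_integral_Ioo]
  set f : ℝ → ℝ := fun x => (√(D x))⁻¹
  set g : ℝ → ℝ := fun x => √(D x) * |w x|
  have hf : EqOn (fun x => f x ^ 2) (fun x => 1 / D x) (Ioo a b) := fun x hx => by
    simp [f, inv_pow, Real.sq_sqrt (hDpos x hx).le]
  have hg : EqOn (fun x => g x ^ 2) (fun x => D x * w x ^ 2) (Ioo a b) := fun x hx => by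
    simp [g, mul_pow, Real.sq_sqrt (hDpos x hx).le]
  have hfg : EqOn (fun x => f x * g x) (fun x => |w x|) (Ioo a b) := fun x hx => by
    have : √(D x) ≠ 0 := (Real.sqrt_pos.2 (hDpos x hx)).ne'
    simp [f, g, this]
  have hIoo : ∀ {h : ℝ → ℝ}, ContinuousOn h (Icc a b) → IntegrableOn h (Ioo a b) := fun hh =>
    (hh.integrableOn_Icc).mono_set Ioo_subset_Icc_self
  have key := abs_integral_mul_le_sqrt_mul_sqrt (μ := volume.restrict (Ioo a b))
    (((intervalIntegrable_iff_integrableOn_Ioo_of_le hab).1 hDinv).congr_fun hf.symm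
      measurableSet_Ioo)
    ((hIoo (hD.mul (hw.pow 2))).congr_fun hg.symm measurableSet_Ioo)
    ((hIoo hw.abs).congr_fun hfg.symm measurableSet_Ioo)
  rw [setIntegral_congr_fun measurableSet_Ioo hf, setIntegral_congr_fun measurableSet_Ioo hg,
    setIntegral_congr_fun measurableSet_Ioo hfg] at key
  exact (le_abs_self _).trans key

theorem abs_sub_le_integral_abs_deriv (hw : ∀ x ∈ Icc a b, HasDerivAt w (w' x) x)
    (hw' : ContinuousOn w' (Icc a b)) {y z : ℝ} (hy : y ∈ Icc a b) (hz : z ∈ Icc a b) :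
    |w z - w y| ≤ ∫ x in a..b, |w' x| := by
  have hab : a ≤ b := hy.1.trans hy.2
  have hsub : uIcc y z ⊆ Icc a b := uIcc_subset_Icc hy hz
  have hftc : ∫ x in y..z, w' x = w z - w y :=
    intervalIntegral.integral_eq_sub_of_hasDerivAt (fun x hx => hw x (hsub hx))
      ((hw'.mono hsub).intervalIntegrable)
  have hIoc : uIoc y z ⊆ uIoc a b := by
    rw [uIoc, uIoc_of_le hab]
    exact Ioc_subset_Ioc (le_min hy.1 hz.1) (max_le hy.2 hz.2)
  calc |w z - w y| = |∫ x in y..z, w' x| := by rw [hftc]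
    _ ≤ |∫ x in y..z, (|w' x|)| := by
        simpa only [Real.norm_eq_abs] using
          intervalIntegral.norm_integral_le_abs_integral_norm (f := w')
    _ ≤ |∫ x in a..b, (|w' x|)| := intervalIntegral.abs_integral_mono_interval hIoc
        (Filter.Eventually.of_forall fun x => abs_nonneg _) (hw'.abs.intervalIntegrable_of_Icc hab)
    _ = ∫ x in a..b, |w' x| :=
        abs_of_nonneg (intervalIntegral.integral_nonneg hab fun x _ => abs_nonneg _)

theorem integral_abs_le_sqrt_mul_sqrt_integral_sq (hab : a ≤ b) (hw : ContinuousOn w (Icc a b)) :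
    ∫ x in a..b, |w x| ≤ √(b - a) * √(∫ x in a..b, w x ^ 2) := by
  have key := intervalIntegral.abs_integral_mul_le_sqrt_mul_sqrt hab (f := fun _ => 1)
    (g := fun x => |w x|) intervalIntegrable_const
    ((hw.abs.pow 2).intervalIntegrable_of_Icc hab)
    (by simpa using hw.abs.intervalIntegrable_of_Icc hab)
  simp only [one_pow, one_mul, sq_abs, intervalIntegral.integral_const, smul_eq_mul, mul_one] at key
  exact (le_abs_self _).trans key

theorem abs_le_sqrt_integral_sq_div_add_integral_abs_deriv (hab : a < b)
    (hw : ∀ x ∈ Icc a b, HasDerivAt w (w' x) x) (hw' : ContinuousOn w' (Icc a b))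
    {z : ℝ} (hz : z ∈ Icc a b) :
    |w z| ≤ √(∫ x in a..b, w x ^ 2) / √(b - a) + ∫ x in a..b, |w' x| := by
  have hwc := continuousOn_of_forall_continuousAt fun x hx => (hw x hx).continuousAt
  set E := ∫ x in a..b, |w' x|
  have hpt : ∀ y ∈ Icc a b, |w z| ≤ |w y| + E := fun y hy => by
    linarith [abs_sub_le_integral_abs_deriv hw hw' hy hz, abs_sub_abs_le_abs_sub (w z) (w y)]
  have havg := intervalIntegral.integral_mono_on hab.le (intervalIntegrable_const (μ := volume))
    ((hwc.abs.intervalIntegrable_of_Icc hab.le).add intervalIntegrable_const) hpt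
  rw [intervalIntegral.integral_const, intervalIntegral.integral_add
    (hwc.abs.intervalIntegrable_of_Icc hab.le) intervalIntegrable_const,
    intervalIntegral.integral_const, smul_eq_mul, smul_eq_mul] at havg
  have hL1 := integral_abs_le_sqrt_mul_sqrt_integral_sq hab.le hwc
  have hs : 0 < √(b - a) := Real.sqrt_pos.2 (sub_pos.2 hab)
  have hss : √(b - a) * √(b - a) = b - a := Real.mul_self_sqrt (sub_pos.2 hab).le
  rw [div_add' _ _ _ hs.ne', le_div_iff₀ hs]
  refine le_of_mul_le_mul_left ?_ hs
  calc
    √(b - a) * (|w z| * √(b - a)) = (b - a) * |w z| := by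
      linear_combination (|w z|) * hss
    _ ≤ √(b - a) * √(∫ x in a..b, w x ^ 2) + (b - a) * E := by linarith
    _ = √(b - a) * (√(∫ x in a..b, w x ^ 2) + E * √(b - a)) := by
      linear_combination (-E) * hss

end Interval

section NormAlpha

variable {zF : ℝ} {D v v' φ φ' w w' : ℝ → ℝ}

theorem normAlpha_nonneg : 0 ≤ normAlpha zF D w w' := Real.sqrt_nonneg _

theorem sqrt_integral_sq_le_normAlpha (hzF : 0 ≤ zF) (hD0 : ∀ x ∈ Icc 0 zF, 0 ≤ D x) :
    √(∫ x in 0..zF, w x ^ 2) ≤ normAlpha zF D w w' :=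
  Real.sqrt_le_sqrt <| le_add_of_nonneg_left <|
    intervalIntegral.integral_nonneg hzF fun x hx => mul_nonneg (hD0 x hx) (sq_nonneg _)

theorem sqrt_integral_mul_sq_le_normAlpha (hzF : 0 ≤ zF) :
    √(∫ x in 0..zF, D x * w' x ^ 2) ≤ normAlpha zF D w w' :=
  Real.sqrt_le_sqrt <| le_add_of_nonneg_right <|
    intervalIntegral.integral_nonneg hzF fun _ _ => sq_nonneg _

theorem abs_le_mul_normAlpha (hzF : 0 < zF) (hD : ContinuousOn D (Icc 0 zF))
    (hDpos : ∀ x ∈ Ioo 0 zF, 0 < D x) (hDinv : IntervalIntegrable (fun x => 1 / D x) volume 0 zF)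
    (hw : ∀ x ∈ Icc 0 zF, HasDerivAt w (w' x) x) (hw' : ContinuousOn w' (Icc 0 zF))
    {z : ℝ} (hz : z ∈ Icc 0 zF) :
    |w z| ≤ (1 / √zF + 2 * IofD zF D) * normAlpha zF D w w' := by
  have hD0 := nonneg_on_Icc_of_pos_on_Ioo hzF hD hDpos
  have hpt := abs_le_sqrt_integral_sq_div_add_integral_abs_deriv hzF hw hw' hz
  rw [sub_zero] at hpt
  have hw'L1 := integral_abs_le_sqrt_integral_inv_mul_sqrt hzF.le hD hDpos hDinv hw'
  have hI : 0 ≤ IofD zF D := Real.sqrt_nonneg _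
  have hN : 0 ≤ normAlpha zF D w w' := normAlpha_nonneg
  calc |w z| ≤ √(∫ x in 0..zF, w x ^ 2) / √zF + IofD zF D * √(∫ x in 0..zF, D x * w' x ^ 2) :=
        hpt.trans (by gcongr; exact hw'L1)
    _ ≤ normAlpha zF D w w' / √zF + IofD zF D * normAlpha zF D w w' := by
        gcongr
        · exact sqrt_integral_sq_le_normAlpha hzF.le hD0
        · exact sqrt_integral_mul_sq_le_normAlpha hzF.le
    _ = (1 / √zF + IofD zF D) * normAlpha zF D w w' := by ring
    _ ≤ (1 / √zF + 2 * IofD zF D) * normAlpha zF D w w' := by gcongr; linarith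

theorem abs_mul_le_sq_mul_normAlpha_mul (hzF : 0 < zF) (hD : ContinuousOn D (Icc 0 zF))
    (hDpos : ∀ x ∈ Ioo 0 zF, 0 < D x) (hDinv : IntervalIntegrable (fun x => 1 / D x) volume 0 zF)
    (hv : ∀ x ∈ Icc 0 zF, HasDerivAt v (v' x) x) (hv' : ContinuousOn v' (Icc 0 zF))
    (hφ : ∀ x ∈ Icc 0 zF, HasDerivAt φ (φ' x) x) (hφ' : ContinuousOn φ' (Icc 0 zF))
    {z : ℝ} (hz : z ∈ Icc 0 zF) :
    |φ z * v z| ≤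
      (1 / √zF + 2 * IofD zF D) ^ 2 * (normAlpha zF D v v' * normAlpha zF D φ φ') := by
  have hφK := abs_le_mul_normAlpha hzF hD hDpos hDinv hφ hφ' hz
  have hvK := abs_le_mul_normAlpha hzF hD hDpos hDinv hv hv' hz
  rw [abs_mul]
  calc |φ z| * |v z| ≤ (1 / √zF + 2 * IofD zF D) * normAlpha zF D φ φ' *
        ((1 / √zF + 2 * IofD zF D) * normAlpha zF D v v') :=
        mul_le_mul hφK hvK (abs_nonneg _) ((abs_nonneg _).trans hφK)
    _ = (1 / √zF + 2 * IofD zF D) ^ 2 * (normAlpha zF D v v' * normAlpha zF D φ φ') := by ring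

theorem abs_integral_mul_le_normAlpha_mul (hzF : 0 ≤ zF) (hD0 : ∀ x ∈ Icc 0 zF, 0 ≤ D x)
    (hv : ContinuousOn v (Icc 0 zF)) (hφ : ContinuousOn φ (Icc 0 zF)) :
    |∫ x in 0..zF, v x * φ x| ≤ normAlpha zF D v v' * normAlpha zF D φ φ' :=
  (intervalIntegral.abs_integral_mul_le_sqrt_mul_sqrt hzF
    ((hv.pow 2).intervalIntegrable_of_Icc hzF) ((hφ.pow 2).intervalIntegrable_of_Icc hzF)
    ((hv.mul hφ).intervalIntegrable_of_Icc hzF)).trans <|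
  mul_le_mul (sqrt_integral_sq_le_normAlpha hzF hD0) (sqrt_integral_sq_le_normAlpha hzF hD0)
    (Real.sqrt_nonneg _) (Real.sqrt_nonneg _)

theorem abs_integral_mul_deriv_mul_deriv_le_normAlpha_mul (hzF : 0 ≤ zF)
    (hD : ContinuousOn D (Icc 0 zF)) (hD0 : ∀ x ∈ Icc 0 zF, 0 ≤ D x)
    (hv' : ContinuousOn v' (Icc 0 zF)) (hφ' : ContinuousOn φ' (Icc 0 zF)) :
    |∫ x in 0..zF, D x * v' x * φ' x| ≤ normAlpha zF D v v' * normAlpha zF D φ φ' :=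
  (abs_integral_mul_mul_le_sqrt_mul_sqrt hzF hD hD0 hv' hφ').trans <|
  mul_le_mul (sqrt_integral_mul_sq_le_normAlpha hzF) (sqrt_integral_mul_sq_le_normAlpha hzF)
    (Real.sqrt_nonneg _) (Real.sqrt_nonneg _)

theorem abs_integral_mul_deriv_le_normAlpha_mul (hzF : 0 < zF) (hD : ContinuousOn D (Icc 0 zF))
    (hDpos : ∀ x ∈ Ioo 0 zF, 0 < D x) (hDinv : IntervalIntegrable (fun x => 1 / D x) volume 0 zF)
    (hv : ∀ x ∈ Icc 0 zF, HasDerivAt v (v' x) x) (hv' : ContinuousOn v' (Icc 0 zF))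
    (hφ' : ContinuousOn φ' (Icc 0 zF)) :
    |∫ x in 0..zF, v x * φ' x| ≤
      (1 / √zF + 2 * IofD zF D) * IofD zF D * (normAlpha zF D v v' * normAlpha zF D φ φ') := by
  have hvc := continuousOn_of_forall_continuousAt fun x hx => (hv x hx).continuousAt
  set K := 1 / √zF + 2 * IofD zF D
  have hvK : ∀ x ∈ Icc 0 zF, |v x| ≤ K * normAlpha zF D v v' := fun x hx =>
    abs_le_mul_normAlpha hzF hD hDpos hDinv hv hv' hx
  calc |∫ x in 0..zF, v x * φ' x| ≤ ∫ x in 0..zF, |v x * φ' x| :=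
        intervalIntegral.abs_integral_le_integral_abs hzF.le
    _ ≤ ∫ x in 0..zF, K * normAlpha zF D v v' * |φ' x| := by
        refine intervalIntegral.integral_mono_on hzF.le
          ((hvc.mul hφ').abs.intervalIntegrable_of_Icc hzF.le)
          ((hφ'.abs.intervalIntegrable_of_Icc hzF.le).const_mul _) fun x hx => ?_
        rw [abs_mul]
        exact mul_le_mul_of_nonneg_right (hvK x hx) (abs_nonneg _)
    _ = K * normAlpha zF D v v' * ∫ x in 0..zF, |φ' x| := intervalIntegral.integral_const_mul _ _
    _ ≤ K * normAlpha zF D v v' * (IofD zF D * normAlpha zF D φ φ') := by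
        have hK : 0 ≤ K * normAlpha zF D v v' := (abs_nonneg _).trans (hvK 0 ⟨le_rfl, hzF.le⟩)
        have hI : 0 ≤ IofD zF D := Real.sqrt_nonneg _
        gcongr
        exact (integral_abs_le_sqrt_integral_inv_mul_sqrt hzF.le hD hDpos hDinv hφ').trans
          (mul_le_mul_of_nonneg_left (sqrt_integral_mul_sq_le_normAlpha hzF.le) hI)
    _ = K * IofD zF D * (normAlpha zF D v v' * normAlpha zF D φ φ') := by ring

theorem abs_integral_mul_mul_deriv_le_sqrt_sSup_mul (hzF : 0 ≤ zF)
    (hD : ContinuousOn D (Icc 0 zF)) (hD0 : ∀ x ∈ Icc 0 zF, 0 ≤ D x)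
    (hv : ContinuousOn v (Icc 0 zF)) (hφ' : ContinuousOn φ' (Icc 0 zF)) :
    |∫ x in 0..zF, D x * v x * φ' x| ≤
      √(sSup (D '' Icc 0 zF)) * (normAlpha zF D v v' * normAlpha zF D φ φ') := by
  set S := sSup (D '' Icc 0 zF)
  have hDS : ∀ x ∈ Icc 0 zF, D x ≤ S := fun x hx =>
    le_csSup (isCompact_Icc.image_of_continuousOn hD).bddAbove (mem_image_of_mem D hx)
  have hDv : √(∫ x in 0..zF, D x * v x ^ 2) ≤ √S * normAlpha zF D v v' :=
    calc √(∫ x in 0..zF, D x * v x ^ 2) ≤ √(∫ x in 0..zF, S * v x ^ 2) :=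
          Real.sqrt_le_sqrt <| intervalIntegral.integral_mono_on hzF
            ((hD.mul (hv.pow 2)).intervalIntegrable_of_Icc hzF)
            (((hv.pow 2).intervalIntegrable_of_Icc hzF).const_mul S)
            fun x hx => mul_le_mul_of_nonneg_right (hDS x hx) (sq_nonneg _)
      _ = √S * √(∫ x in 0..zF, v x ^ 2) := by
          rw [intervalIntegral.integral_const_mul,
            Real.sqrt_mul' _ (intervalIntegral.integral_nonneg hzF fun _ _ => sq_nonneg _)]
      _ ≤ √S * normAlpha zF D v v' := by gcongr; exact sqrt_integral_sq_le_normAlpha hzF hD0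
  calc |∫ x in 0..zF, D x * v x * φ' x|
      ≤ √(∫ x in 0..zF, D x * v x ^ 2) * √(∫ x in 0..zF, D x * φ' x ^ 2) :=
        abs_integral_mul_mul_le_sqrt_mul_sqrt hzF hD hD0 hv hφ'
    _ ≤ √S * normAlpha zF D v v' * normAlpha zF D φ φ' :=
        mul_le_mul hDv (sqrt_integral_mul_sq_le_normAlpha hzF) (Real.sqrt_nonneg _)
          (mul_nonneg (Real.sqrt_nonneg _) normAlpha_nonneg)
    _ = √S * (normAlpha zF D v v' * normAlpha zF D φ φ') := by ring

end NormAlpha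

theorem abs_Abil_le {zF f Gc Fc Ma : ℝ} {D v v' φ φ' : ℝ → ℝ} (hf : 0 ≤ f) (hGc : 0 ≤ Gc)
    (hFc : 0 ≤ Fc) (hMa : 0 ≤ Ma) :
    |Abil zF f Gc Fc Ma D v v' φ φ'| ≤
      Gc / f * |∫ x in 0..zF, v x * φ x| + 1 / f * |∫ x in 0..zF, D x * v' x * φ' x|
        + Fc * |φ zF * v zF| + Fc * |∫ x in 0..zF, v x * φ' x|
        + Ma / f * |∫ x in 0..zF, D x * v x * φ' x| := by
  have habs : ∀ {c : ℝ} (X : ℝ), 0 ≤ c → |c * X| = c * |X| := fun X hc => by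
    rw [abs_mul, abs_of_nonneg hc]
  rw [← habs _ (div_nonneg hGc hf), ← habs _ (one_div_nonneg.2 hf), ← habs _ hFc, ← habs _ hFc,
    ← habs _ (div_nonneg hMa hf)]
  exact (abs_sub _ _).trans (add_le_add_left ((abs_sub _ _).trans
    (add_le_add_left ((abs_add_le _ _).trans (add_le_add_left (abs_add_le _ _) _)) _)) _)

theorem stmt_2 (zF : ℝ) (hzF : 0 < zF) (D : ℝ → ℝ)
    (hDcont : ContinuousOn D (Set.Icc 0 zF))
    (hDpos : ∀ z ∈ Set.Ico 0 zF, 0 < D z)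
    (hDint : IntervalIntegrable (fun z => 1 / D z) volume 0 zF)
    (f Gc Fc Ma : ℝ) (hf : 0 < f) (hGc : 0 < Gc) (hFc : 0 < Fc) (hMa : 0 < Ma)
    (v v' φ φ' : ℝ → ℝ)
    (hv : ∀ z ∈ Set.Icc 0 zF, HasDerivAt v (v' z) z)
    (hv' : ContinuousOn v' (Set.Icc 0 zF))
    (hφ : ∀ z ∈ Set.Icc 0 zF, HasDerivAt φ (φ' z) z)
    (hφ' : ContinuousOn φ' (Set.Icc 0 zF)) :
    |Abil zF f Gc Fc Ma D v v' φ φ'| ≤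
      (Gc / f + 1 / f + Fc * (1 / Real.sqrt zF + 2 * IofD zF D) ^ 2
          + Fc * (1 / Real.sqrt zF + 2 * IofD zF D) * IofD zF D
          + (Ma / f) * Real.sqrt (sSup (D '' Set.Icc 0 zF)))
        * normAlpha zF D v v' * normAlpha zF D φ φ' := by
  have hDpos' : ∀ x ∈ Ioo 0 zF, 0 < D x := fun x hx => hDpos x (Ioo_subset_Ico_self hx)
  have hD0 := nonneg_on_Icc_of_pos_on_Ioo hzF hDcont hDpos'
  have hvc := continuousOn_of_forall_continuousAt fun x hx => (hv x hx).continuousAt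
  have hφc := continuousOn_of_forall_continuousAt fun x hx => (hφ x hx).continuousAt
  set K := 1 / Real.sqrt zF + 2 * IofD zF D
  calc |Abil zF f Gc Fc Ma D v v' φ φ'|
      ≤ Gc / f * |∫ x in 0..zF, v x * φ x| + 1 / f * |∫ x in 0..zF, D x * v' x * φ' x|
        + Fc * |φ zF * v zF| + Fc * |∫ x in 0..zF, v x * φ' x|
        + Ma / f * |∫ x in 0..zF, D x * v x * φ' x| := abs_Abil_le hf.le hGc.le hFc.le hMa.le
    _ ≤ Gc / f * (normAlpha zF D v v' * normAlpha zF D φ φ')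
        + 1 / f * (normAlpha zF D v v' * normAlpha zF D φ φ')
        + Fc * (K ^ 2 * (normAlpha zF D v v' * normAlpha zF D φ φ'))
        + Fc * (K * IofD zF D * (normAlpha zF D v v' * normAlpha zF D φ φ'))
        + Ma / f * (Real.sqrt (sSup (D '' Icc 0 zF))
          * (normAlpha zF D v v' * normAlpha zF D φ φ')) := by
      gcongr
      · exact abs_integral_mul_le_normAlpha_mul hzF.le hD0 hvc hφc
      · exact abs_integral_mul_deriv_mul_deriv_le_normAlpha_mul hzF.le hDcont hD0 hv' hφ'
      · exact abs_mul_le_sq_mul_normAlpha_mul hzF hDcont hDpos' hDint hv hv' hφ hφ'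
          ⟨hzF.le, le_rfl⟩
      · exact abs_integral_mul_deriv_le_normAlpha_mul hzF hDcont hDpos' hDint hv hv' hφ'
      · exact abs_integral_mul_mul_deriv_le_sqrt_sSup_mul hzF.le hDcont hD0 hvc hφ'
    _ = _ := by ring
end

section
/- Let m ≥ 1, n = m+1, h > 0, and let D ∈ ℝⁿ have entries D_1,…,D_n. Let S(D) ∈ ℝ^{m×m} be the symmetric tridiagonal matrix with S(D)_{ii} = (D_i + 2D_{i+1} + D_{i+2})/(2h) for 1 ≤ i ≤ m−1, S(D)_{mm} = (D_m + D_{m+1})/(2h), S(D)_{i,i+1} = S(D)_{i+1,i} = −(D_{i+1} + D_{i+2})/(2h) for 1 ≤ i ≤ m−1, and all other entries zero. Then for every v ∈ ℝ^m, 2h·vᵀS(D)v = Σ_{i=2}^{m}(D_i + D_{i+1})·(v_i − v_{i−1})² + (D_1 + D_2)·v_1². Consequently, if D_i > 0 for all 1 ≤ i ≤ n, then S(D) is symmetric positive definite: vᵀS(D)v > 0 for every nonzero v ∈ ℝ^m. -/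
/-!
`S(D)` is the linear finite-element stiffness matrix of `-(D u')'` with a Dirichlet condition at
the left end and a Neumann condition at the right end. Row `i` of `2h S(D) v` is the difference
`g_i - g_{i+1}` of the discrete fluxes `g_k = (D_k + D_{k+1}) (v_k - v_{k-1})`, where `v_0 = 0`
and `g_{m+1} = 0`. Summation by parts turns `2h vᵀ S(D) v` into
`∑ g_k (v_k - v_{k-1}) = ∑ (D_k + D_{k+1}) (v_k - v_{k-1})²`. For positive `D` every term is
nonnegative, and all of them vanish only if `v_k = v_{k-1}` for every `k`, i.e. `v = 0`.
-/

open Matrix Finset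

/-- 1-based access to the entries of a finite vector, with value `0` at index `0`
and out of range. -/
def pad1 {n : ℕ} (v : Fin n → ℝ) : ℕ → ℝ :=
  fun k => if hk : k - 1 < n then (if k = 0 then 0 else v ⟨k - 1, hk⟩) else 0

/-- The symmetric tridiagonal stiffness matrix `S(D)` (1-based mathematical indexing):
`S_{ii} = (D_i + 2D_{i+1} + D_{i+2})/(2h)` for `i < m`, `S_{mm} = (D_m + D_{m+1})/(2h)`,
`S_{i,i+1} = S_{i+1,i} = −(D_{i+1} + D_{i+2})/(2h)`. -/
noncomputable def matS (m : ℕ) (h : ℝ) (d : ℕ → ℝ) : Matrix (Fin m) (Fin m) ℝ :=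
  Matrix.of fun i j =>
    if i = j then
      (if i.val + 1 = m then (d m + d (m + 1)) / (2 * h)
       else (d (i.val + 1) + 2 * d (i.val + 2) + d (i.val + 3)) / (2 * h))
    else if i.val + 1 = j.val then -((d (i.val + 2) + d (i.val + 3)) / (2 * h))
    else if j.val + 1 = i.val then -((d (j.val + 2) + d (j.val + 3)) / (2 * h))
    else 0

section Pad

variable {n : ℕ} (v : Fin n → ℝ)

@[simp] lemma pad1_zero : pad1 v 0 = 0 := by simp [pad1]

lemma pad1_succ {k : ℕ} (hk : k < n) : pad1 v (k + 1) = v ⟨k, hk⟩ := by simp [pad1, hk]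

lemma pad1_eq_zero_of_lt {k : ℕ} (hk : n < k) : pad1 v k = 0 := by
  simp [pad1, show ¬ k - 1 < n by omega]

lemma sum_ite_val_eq_mul (k : ℕ) (a : ℝ) :
    ∑ j : Fin n, (if (j : ℕ) = k then a * v j else 0) = a * pad1 v (k + 1) := by
  by_cases hk : k < n
  · rw [pad1_succ v hk, Fintype.sum_eq_single ⟨k, hk⟩ fun j hj => if_neg fun h => hj (Fin.ext h)]
    simp
  · rw [pad1_eq_zero_of_lt v (by omega), mul_zero]
    exact Finset.sum_eq_zero fun j _ => if_neg (by omega)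

lemma sum_ite_val_add_one_eq_mul (k : ℕ) (a : ℝ) :
    ∑ j : Fin n, (if (j : ℕ) + 1 = k then a * v j else 0) = a * pad1 v k := by
  cases k with
  | zero => simp
  | succ k => simpa using sum_ite_val_eq_mul v k a

lemma sum_univ_fin_eq_sum_Icc_one (F : ℕ → ℝ) : ∑ i : Fin n, F (i + 1) = ∑ k ∈ Icc 1 n, F k := by
  rw [Fin.sum_univ_eq_sum_range (fun i => F (i + 1)), range_eq_Ico, sum_Ico_add',
    Ico_add_one_right_eq_Icc]

end Pad

lemma pad1_pos {n : ℕ} {v : Fin n → ℝ} (hv : ∀ i, 0 < v i) {k : ℕ} (hk₁ : 1 ≤ k)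
    (hk₂ : k ≤ n) :
    0 < pad1 v k := by
  obtain ⟨k, rfl⟩ := Nat.exists_eq_add_of_le' hk₁
  rw [pad1_succ v (by omega)]
  exact hv _

def flux {m : ℕ} (d : ℕ → ℝ) (v : Fin m → ℝ) (k : ℕ) : ℝ :=
  if k ≤ m then (d k + d (k + 1)) * (pad1 v k - pad1 v (k - 1)) else 0

lemma matS_apply_mul {m : ℕ} (h : ℝ) (d : ℕ → ℝ) (v : Fin m → ℝ) (i j : Fin m) :
    matS m h d i j * v j =
      (if (j : ℕ) = i then matS m h d i i * v j else 0)
        + (if (j : ℕ) = i + 1 then -((d (i + 2) + d (i + 3)) / (2 * h)) * v j else 0)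
        + (if (j : ℕ) + 1 = i then -((d (i + 1) + d (i + 2)) / (2 * h)) * v j else 0) := by
  by_cases hij : j = i
  · subst hij; simp
  have hij' : (j : ℕ) ≠ i := fun hji => hij (Fin.ext hji)
  simp only [matS, of_apply, if_neg hij', if_neg (Ne.symm hij), zero_add]
  split_ifs <;> first | omega | simp only [zero_mul, add_zero, zero_add]
  rw [show (j : ℕ) + 2 = i + 1 by omega, show (j : ℕ) + 3 = i + 2 by omega]

lemma two_mul_mul_matS_mulVec_apply {m : ℕ} {h : ℝ} (hh : h ≠ 0) (d : ℕ → ℝ) (v : Fin m → ℝ)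
    (i : Fin m) :
    2 * h * (matS m h d *ᵥ v) i = flux d v (i + 1) - flux d v (i + 2) := by
  simp only [mulVec, dotProduct, matS_apply_mul, sum_add_distrib, sum_ite_val_eq_mul,
    sum_ite_val_add_one_eq_mul]
  have h₁ : flux d v (i + 1) = (d (i + 1) + d (i + 2)) * (pad1 v (i + 1) - pad1 v i) :=
    if_pos i.isLt
  by_cases hi : (i : ℕ) + 1 = m
  · have h₂ : flux d v (i + 2) = 0 := if_neg (by omega)
    rw [h₁, h₂, pad1_eq_zero_of_lt v (show m < (i : ℕ) + 1 + 1 by omega)]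
    simp only [matS, of_apply, if_true, ← hi]
    field_simp
    ring
  · have h₂ : flux d v (i + 2) = (d (i + 2) + d (i + 3)) * (pad1 v (i + 2) - pad1 v (i + 1)) :=
      if_pos (by omega)
    rw [h₁, h₂]
    simp only [matS, of_apply, if_true, if_neg hi]
    field_simp
    ring

lemma sum_Icc_mul_sub_eq (w g : ℕ → ℝ) (m : ℕ) :
    ∑ k ∈ Icc 1 m, w k * (g k - g (k + 1)) =
      ∑ k ∈ Icc 1 m, (w k - w (k - 1)) * g k + w 0 * g 1 - w m * g (m + 1) := by
  induction m with
  | zero => simp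
  | succ m ih =>
    rw [sum_Icc_succ_top (by omega), sum_Icc_succ_top (by omega), ih, Nat.add_sub_cancel]
    ring

theorem two_mul_mul_dotProduct_matS_mulVec {m : ℕ} {h : ℝ} (hh : h ≠ 0) (d : ℕ → ℝ)
    (v : Fin m → ℝ) :
    2 * h * (v ⬝ᵥ matS m h d *ᵥ v) =
      ∑ k ∈ Icc 1 m, (d k + d (k + 1)) * (pad1 v k - pad1 v (k - 1)) ^ 2 := by
  have hflux : flux d v (m + 1) = 0 := if_neg (by omega)
  calc 2 * h * (v ⬝ᵥ matS m h d *ᵥ v)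
      = ∑ i : Fin m, pad1 v (i + 1) * (flux d v (i + 1) - flux d v (i + 1 + 1)) := by
        rw [dotProduct, mul_sum]
        refine sum_congr rfl fun i _ => ?_
        rw [pad1_succ v i.isLt, ← two_mul_mul_matS_mulVec_apply hh]
        ring
    _ = ∑ k ∈ Icc 1 m, pad1 v k * (flux d v k - flux d v (k + 1)) :=
        sum_univ_fin_eq_sum_Icc_one (fun k => pad1 v k * (flux d v k - flux d v (k + 1)))
    _ = ∑ k ∈ Icc 1 m, (pad1 v k - pad1 v (k - 1)) * flux d v k := by
        rw [sum_Icc_mul_sub_eq, pad1_zero, hflux]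
        ring
    _ = _ := sum_congr rfl fun k hk => by
        rw [flux, if_pos (mem_Icc.mp hk).2]
        ring

lemma eq_zero_of_pad1_eq_pad1_sub_one {n : ℕ} {v : Fin n → ℝ}
    (hv : ∀ k ∈ Icc 1 n, pad1 v k = pad1 v (k - 1)) : v = 0 := by
  have hpad : ∀ k ≤ n, pad1 v k = 0 := by
    intro k hk
    induction k with
    | zero => exact pad1_zero v
    | succ k ih => rw [hv (k + 1) (mem_Icc.mpr ⟨by omega, hk⟩), Nat.add_sub_cancel, ih (by omega)]
  funext i
  rw [Pi.zero_apply, ← hpad (i + 1) i.isLt, pad1_succ v i.isLt]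

theorem dotProduct_matS_mulVec_pos {m : ℕ} {h : ℝ} (hh : 0 < h) {D : Fin (m + 1) → ℝ}
    (hD : ∀ k, 0 < D k) {v : Fin m → ℝ} (hv : v ≠ 0) :
    0 < v ⬝ᵥ matS m h (pad1 D) *ᵥ v := by
  have hc : ∀ k ∈ Icc 1 m, 0 < pad1 D k + pad1 D (k + 1) := fun k hk => by
    obtain ⟨hk₁, hk₂⟩ := mem_Icc.mp hk
    exact add_pos (pad1_pos hD hk₁ (by omega)) (pad1_pos hD (by omega) (by omega))
  have hterm : ∀ k ∈ Icc 1 m,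
      0 ≤ (pad1 D k + pad1 D (k + 1)) * (pad1 v k - pad1 v (k - 1)) ^ 2 :=
    fun k hk => mul_nonneg (hc k hk).le (sq_nonneg _)
  have hsum :
      ∑ k ∈ Icc 1 m, (pad1 D k + pad1 D (k + 1)) * (pad1 v k - pad1 v (k - 1)) ^ 2 ≠ 0 := by
    intro hzero
    refine hv (eq_zero_of_pad1_eq_pad1_sub_one fun k hk => ?_)
    have hk' := (sum_eq_zero_iff_of_nonneg hterm).mp hzero k hk
    rwa [mul_eq_zero, or_iff_right (hc k hk).ne', sq_eq_zero_iff, sub_eq_zero] at hk'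
  have hpos : 0 < 2 * h * (v ⬝ᵥ matS m h (pad1 D) *ᵥ v) := by
    rw [two_mul_mul_dotProduct_matS_mulVec hh.ne']
    exact (sum_nonneg hterm).lt_of_ne' hsum
  exact pos_of_mul_pos_right hpos (by positivity)

theorem stmt_10_general (m : ℕ) (h : ℝ) (hh : 0 < h) (D : Fin (m + 1) → ℝ) :
    (∀ v : Fin m → ℝ,
      2 * h * (v ⬝ᵥ (matS m h (pad1 D)).mulVec v) =
        (∑ i ∈ Finset.Icc 2 m,
            (pad1 D i + pad1 D (i + 1)) * (pad1 v i - pad1 v (i - 1)) ^ 2)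
          + (pad1 D 1 + pad1 D 2) * (pad1 v 1) ^ 2) ∧
    ((∀ k : Fin (m + 1), 0 < D k) →
      ∀ v : Fin m → ℝ, v ≠ 0 → 0 < v ⬝ᵥ (matS m h (pad1 D)).mulVec v) := by
  refine ⟨fun v => ?_, fun hD v hv => dotProduct_matS_mulVec_pos hh hD hv⟩
  rw [two_mul_mul_dotProduct_matS_mulVec hh.ne']
  rcases Nat.eq_zero_or_pos m with rfl | hm
  · simp [pad1_eq_zero_of_lt v one_pos]
  · rw [← sum_Ioc_add_eq_sum_Icc hm, ← Icc_add_one_left_eq_Ioc, Nat.sub_self, pad1_zero, sub_zero]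
    rfl

theorem stmt_10 (m : ℕ) (hm : 1 ≤ m) (h : ℝ) (hh : 0 < h) (D : Fin (m + 1) → ℝ) :
    (∀ v : Fin m → ℝ,
      2 * h * (v ⬝ᵥ (matS m h (pad1 D)).mulVec v) =
        (∑ i ∈ Finset.Icc 2 m,
            (pad1 D i + pad1 D (i + 1)) * (pad1 v i - pad1 v (i - 1)) ^ 2)
          + (pad1 D 1 + pad1 D 2) * (pad1 v 1) ^ 2) ∧
    ((∀ k : Fin (m + 1), 0 < D k) →
      ∀ v : Fin m → ℝ, v ≠ 0 → 0 < v ⬝ᵥ (matS m h (pad1 D)).mulVec v) :=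
  stmt_10_general m h hh D
end
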